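/- arXiv:1706.03113 — 4 statements merged into one kernel-verified Lean document; each statement's English description precedes it below -/
import Mathlib

section
/- Let p : ℝ^d → ℝ be continuous and compactly supported. Suppose A and A' belong to the same connected component of {x : p(x) ≥ λᵢ} for each i in a sequence with λᵢ ≤ λᵢ₊₁ for all i. Then A and A' belong to the same connected component of {x : p(x) ≥ λ₀}, where λ₀ = sup_i λᵢ. -/
/-! Fix `a ∈ A` and let `C i` be the component of `{l i ≤ p}` containing `a`. The `C i` decrease,
are closed, contain `A ∪ A'`, and their intersection lies in `{⨆ i, l i ≤ p}`; so it suffices that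
`⋂ i, C i` is preconnected. In dimension `≤ 1` this is order-connectedness. If some `C N` is
bounded, the tail `C N ⊇ C (N+1) ⊇ ⋯` consists of compact connected sets. Otherwise every level is
`≤ 0`, so in dimension `≥ 2` each `C i` contains the connected exterior `U` of a ball containing the
support; then `⋂ i, C i` is the union of `U` with the nested intersection of the compact connected
sets `C i ∩ closedBall 0 r`, connected because `C i ∩ closedBall 0 r` is the image of `C i` under
the radial retraction onto the ball. -/

open Metric Set

/-- `A` and `A'` lie in one (common) connected component of `F`. -/
def sameComp {X : Type*} [TopologicalSpace X] (F A A' : Set X) : Prop :=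
  ∃ x ∈ F, A ⊆ connectedComponentIn F x ∧ A' ⊆ connectedComponentIn F x

theorem IsClosed.connectedComponentIn {X : Type*} [TopologicalSpace X] {F : Set X}
    (hF : IsClosed F) (x : X) : IsClosed (connectedComponentIn F x) := by
  by_cases hx : x ∈ F
  · exact isClosed_of_closure_subset <|
      isPreconnected_connectedComponentIn.closure.subset_connectedComponentIn
        (subset_closure (mem_connectedComponentIn hx))
        (closure_minimal (connectedComponentIn_subset F x) hF)
  · simp [connectedComponentIn_eq_empty hx]

theorem IsPreconnected.iInter_of_directed_isCompact {X ι : Type*} [TopologicalSpace X]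
    [T2Space X] [Nonempty ι] {C : ι → Set X} (hdir : Directed (· ⊇ ·) C)
    (hcomp : ∀ i, IsCompact (C i)) (hconn : ∀ i, IsPreconnected (C i)) :
    IsPreconnected (⋂ i, C i) := by
  set K := ⋂ i, C i
  have hKclosed : IsClosed K := isClosed_iInter fun i => (hcomp i).isClosed
  have hKcomp : IsCompact K :=
    (hcomp (Classical.arbitrary ι)).of_isClosed_subset hKclosed (iInter_subset _ _)
  rw [isPreconnected_iff_subset_of_fully_disjoint_closed hKclosed]
  intro u v hu hv hKuv huv
  obtain ⟨U, V, hU, hV, huU, hvV, hUV⟩ := SeparatedNhds.of_isCompact_isCompact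
    (hKcomp.inter_right hu) (hKcomp.inter_right hv) (huv.mono inter_subset_right inter_subset_right)
  have hKUV : K ⊆ U ∪ V := fun x hx =>
    (hKuv hx).imp (fun hxu => huU ⟨hx, hxu⟩) fun hxv => hvV ⟨hx, hxv⟩
  obtain ⟨n, hn⟩ := exists_subset_nhds_of_isCompact hdir hcomp fun x hx =>
    (hU.union hV).mem_nhds (hKUV hx)
  -- `C n` lies on one side of the separation, and `K ⊆ C n`.
  refine ((hconn n).subset_or_subset hU hV hUV hn).imp (fun hnU x hx => ?_) fun hnV x hx => ?_
  · refine (hKuv hx).resolve_right fun hxv => hUV.le_bot ⟨hnU ?_, hvV ⟨hx, hxv⟩⟩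
    exact iInter_subset C n hx
  · refine (hKuv hx).resolve_left fun hxu => hUV.le_bot ⟨huU ⟨hx, hxu⟩, hnV ?_⟩
    exact iInter_subset C n hx

theorem isPreconnected_iInter_of_le_one {d : ℕ} (hd : d ≤ 1) {ι : Sort*}
    {C : ι → Set (EuclideanSpace ℝ (Fin d))} (hconn : ∀ i, IsPreconnected (C i)) :
    IsPreconnected (⋂ i, C i) := by
  interval_cases d
  · exact Set.subsingleton_of_subsingleton.isPreconnected
  · let e : EuclideanSpace ℝ (Fin 1) ≃ₜ ℝ :=
      (EuclideanSpace.equiv (Fin 1) ℝ).toHomeomorph.trans (Homeomorph.funUnique (Fin 1) ℝ)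
    rw [← e.isPreconnected_image, image_iInter e.bijective, isPreconnected_iff_ordConnected]
    exact ordConnected_iInter fun i =>
      isPreconnected_iff_ordConnected.1 (e.isPreconnected_image.2 (hconn i))

section NormedSpace

variable {E : Type*} [NormedAddCommGroup E] [NormedSpace ℝ E]

theorem isPreconnected_compl_closedBall (hE : 1 < Module.rank ℝ E) (c : E) (R : ℝ) :
    IsPreconnected (closedBall c R)ᶜ := by
  rcases lt_or_ge R 0 with hR | hR
  · simpa [closedBall_eq_empty.2 hR] using isPreconnected_univ
  have himage : (closedBall c R)ᶜ =
      (fun q : ℝ × E => c + q.1 • q.2) '' (Ioi R ×ˢ sphere 0 1) := by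
    ext x
    simp only [mem_compl_iff, mem_closedBall, not_le, dist_eq_norm, mem_image, mem_prod,
      mem_Ioi, mem_sphere_zero_iff_norm, Prod.exists]
    constructor
    · intro hx
      have hx0 : ‖x - c‖ ≠ 0 := (hR.trans_lt hx).ne'
      refine ⟨‖x - c‖, ‖x - c‖⁻¹ • (x - c), ⟨hx, ?_⟩, ?_⟩
      · rw [norm_smul, norm_inv, norm_norm, inv_mul_cancel₀ hx0]
      · rw [smul_smul, mul_inv_cancel₀ hx0, one_smul, add_sub_cancel]
    · rintro ⟨t, u, ⟨ht, hu⟩, rfl⟩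
      rwa [add_sub_cancel_left, norm_smul, hu, mul_one, Real.norm_of_nonneg (hR.trans ht.le)]
  rw [himage]
  exact (isPreconnected_Ioi.prod (isPreconnected_sphere hE 0 1)).image _
    (continuous_const.add (continuous_fst.smul continuous_snd)).continuousOn

theorem IsPreconnected.inter_closedBall_of_sphere_subset {S : Set E} (hS : IsPreconnected S)
    {r : ℝ} (hr : 0 < r) (hsphere : sphere 0 r ⊆ S) : IsPreconnected (S ∩ closedBall 0 r) := by
  set ρ : E → E := fun x => (r / max r ‖x‖) • x
  have hmax : ∀ x : E, 0 < max r ‖x‖ := fun x => hr.trans_le (le_max_left _ _)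
  have hρ : Continuous ρ := (continuous_const.div (continuous_const.max continuous_norm)
    fun x => (hmax x).ne').smul continuous_id
  have hρ_inner : ∀ x : E, ‖x‖ ≤ r → ρ x = x := fun x hx => by
    simp only [ρ, max_eq_left hx, div_self hr.ne', one_smul]
  have hρ_outer : ∀ x : E, r ≤ ‖x‖ → ‖ρ x‖ = r := fun x hx => by
    have hx0 : 0 < ‖x‖ := hr.trans_le hx
    simp only [ρ, max_eq_right hx, norm_smul, Real.norm_of_nonneg (div_pos hr hx0).le,
      div_mul_cancel₀ _ hx0.ne']
  suffices S ∩ closedBall 0 r = ρ '' S from this ▸ hS.image ρ hρ.continuousOn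
  refine Subset.antisymm (fun x ⟨hxS, hxB⟩ => ⟨x, hxS, hρ_inner x (mem_closedBall_zero_iff.1 hxB)⟩) ?_
  rintro _ ⟨x, hxS, rfl⟩
  rcases le_total ‖x‖ r with hx | hx
  · rw [hρ_inner x hx]
    exact ⟨hxS, mem_closedBall_zero_iff.2 hx⟩
  · exact ⟨hsphere (mem_sphere_zero_iff_norm.2 (hρ_outer x hx)),
      mem_closedBall_zero_iff.2 (hρ_outer x hx).le⟩

theorem isPreconnected_iInter_of_compl_closedBall_subset [ProperSpace E]
    (hE : 1 < Module.rank ℝ E) {C : ℕ → Set E} (hanti : Antitone C)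
    (hclosed : ∀ i, IsClosed (C i)) (hconn : ∀ i, IsPreconnected (C i)) {R : ℝ}
    (hext : ∀ i, (closedBall 0 R)ᶜ ⊆ C i) : IsPreconnected (⋂ i, C i) := by
  have : Nontrivial E := rank_pos_iff_nontrivial.1 (zero_lt_one.trans hE)
  set r := max R 0 + 1
  have hr : 0 < r := by positivity
  have hRr : R < r := (le_max_left R 0).trans_lt (lt_add_one _)
  have hsphere : ∀ i, sphere 0 r ⊆ C i := fun i x hx =>
    hext i (by simpa [mem_sphere_zero_iff_norm.1 hx] using hRr)
  have hcore : IsPreconnected (⋂ i, C i ∩ closedBall 0 r) :=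
    IsPreconnected.iInter_of_directed_isCompact
      (hanti.inter antitone_const).directed_ge
      (fun i => (isCompact_closedBall 0 r).inter_left (hclosed i))
      (fun i => (hconn i).inter_closedBall_of_sphere_subset hr (hsphere i))
  have hsplit : ⋂ i, C i = (⋂ i, C i ∩ closedBall 0 r) ∪ (closedBall 0 R)ᶜ := by
    refine Subset.antisymm (fun x hx => ?_) (union_subset (iInter_mono fun i => inter_subset_left)
      (subset_iInter hext))
    rcases le_or_gt ‖x‖ r with hxr | hxr
    · exact Or.inl (mem_iInter.2 fun i => ⟨mem_iInter.1 hx i, mem_closedBall_zero_iff.2 hxr⟩)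
    · exact Or.inr (by simpa using hRr.trans hxr)
  obtain ⟨x₀, hx₀⟩ := exists_norm_eq E hr.le
  rw [hsplit]
  exact hcore.union x₀
    (mem_iInter.2 fun i => ⟨hsphere i (mem_sphere_zero_iff_norm.2 hx₀),
      mem_closedBall_zero_iff.2 hx₀.le⟩)
    (by simpa [hx₀] using hRr) (isPreconnected_compl_closedBall hE 0 R)

end NormedSpace

section Superlevel

variable {X : Type*} [PseudoMetricSpace X] {p : X → ℝ}

theorem HasCompactSupport.isBounded_setOf_le (hsupp : HasCompactSupport p) {c : ℝ}
    (hc : 0 < c) : Bornology.IsBounded {x | c ≤ p x} :=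
  hsupp.isBounded.subset fun _ hx => subset_tsupport p (hc.trans_le hx).ne'

theorem compl_closedBall_subset_setOf_le {x₀ : X} {R c : ℝ} (hR : tsupport p ⊆ closedBall x₀ R)
    (hc : c ≤ 0) : (closedBall x₀ R)ᶜ ⊆ {x | c ≤ p x} := fun _ hx =>
  hc.trans (image_eq_zero_of_notMem_tsupport fun h => hx (hR h)).ge

end Superlevel

theorem isPreconnected_iInter_connectedComponentIn_setOf_le {d : ℕ}
    {p : EuclideanSpace ℝ (Fin d) → ℝ} (hp : Continuous p) (hsupp : HasCompactSupport p)
    {l : ℕ → ℝ} (hl : Monotone l) (a : EuclideanSpace ℝ (Fin d)) :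
    IsPreconnected (⋂ i, connectedComponentIn {x | l i ≤ p x} a) := by
  set C := fun i => connectedComponentIn {x | l i ≤ p x} a
  have hanti : Antitone C := fun i j hij =>
    connectedComponentIn_mono a fun x hx => (hl hij).trans hx
  have hclosed : ∀ i, IsClosed (C i) := fun i =>
    (isClosed_le continuous_const hp).connectedComponentIn a
  have hconn : ∀ i, IsPreconnected (C i) := fun i => isPreconnected_connectedComponentIn
  rcases le_or_gt d 1 with hd | hd
  · exact isPreconnected_iInter_of_le_one hd hconn
  by_cases hbdd : ∃ N, Bornology.IsBounded (C N)
  · obtain ⟨N, hN⟩ := hbdd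
    rw [← hanti.iInter_nat_add N]
    exact IsPreconnected.iInter_of_directed_isCompact
      (hanti.comp_monotone fun i j hij => Nat.add_le_add_right hij N).directed_ge
      (fun i => isCompact_of_isClosed_isBounded (hclosed _) (hN.subset (hanti (N.le_add_left i))))
      fun i => hconn _
  push Not at hbdd
  have hE : 1 < Module.rank ℝ (EuclideanSpace ℝ (Fin d)) := by
    rw [← Module.finrank_eq_rank, finrank_euclideanSpace_fin]
    exact_mod_cast hd
  obtain ⟨R, hR⟩ := hsupp.isBounded.subset_closedBall 0
  have hlevel : ∀ i, l i ≤ 0 := fun i => not_lt.1 fun hi =>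
    hbdd i ((hsupp.isBounded_setOf_le hi).subset (connectedComponentIn_subset _ _))
  refine isPreconnected_iInter_of_compl_closedBall_subset hE hanti hclosed hconn
    (R := R) fun i => ?_
  -- An unbounded `C i` meets the connected exterior, which then lies in the same component.
  obtain ⟨y, hyC, hyU⟩ : ∃ y ∈ C i, y ∈ (closedBall 0 R)ᶜ :=
    not_subset.1 fun h => hbdd i (isBounded_closedBall.subset h)
  rw [connectedComponentIn_eq hyC]
  exact (isPreconnected_compl_closedBall hE 0 R).subset_connectedComponentIn hyU
    (compl_closedBall_subset_setOf_le hR (hlevel i))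

theorem stmt1_general (d : ℕ) (p : EuclideanSpace ℝ (Fin d) → ℝ)
    (hp : Continuous p) (hsupp : HasCompactSupport p)
    (l : ℕ → ℝ) (hmono : ∀ i, l i ≤ l (i + 1))
    (A A' : Set (EuclideanSpace ℝ (Fin d))) (hA : A.Nonempty)
    (hsame : ∀ i, sameComp {x | l i ≤ p x} A A') :
    sameComp {x | (⨆ i, l i) ≤ p x} A A' := by
  obtain ⟨a, ha⟩ := hA
  set K := ⋂ i, connectedComponentIn {x | l i ≤ p x} a
  have hsub : A ⊆ K ∧ A' ⊆ K := by
    simp only [K, subset_iInter_iff, ← forall_and]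
    intro i
    obtain ⟨x, -, hAx, hA'x⟩ := hsame i
    have hxa := connectedComponentIn_eq (hAx ha)
    rw [hxa] at hAx hA'x
    exact ⟨hAx, hA'x⟩
  have hKF : K ⊆ {x | (⨆ i, l i) ≤ p x} := fun x hx => show (⨆ i, l i) ≤ p x from
    ciSup_le fun i => connectedComponentIn_subset {x | l i ≤ p x} a (mem_iInter.1 hx i)
  have hK := isPreconnected_iInter_connectedComponentIn_setOf_le hp hsupp
    (monotone_nat_of_le_succ hmono) a
  have haK : a ∈ K := hsub.1 ha
  exact ⟨a, hKF haK, hsub.1.trans (hK.subset_connectedComponentIn haK hKF),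
    hsub.2.trans (hK.subset_connectedComponentIn haK hKF)⟩

theorem stmt1 (d : ℕ) (p : EuclideanSpace ℝ (Fin d) → ℝ)
    (hp : Continuous p) (hsupp : HasCompactSupport p)
    (l : ℕ → ℝ) (hmono : ∀ i, l i ≤ l (i + 1)) (hbdd : BddAbove (Set.range l))
    (A A' : Set (EuclideanSpace ℝ (Fin d))) (hA : A.Nonempty) (hA' : A'.Nonempty)
    (hsame : ∀ i, sameComp {x | l i ≤ p x} A A') :
    sameComp {x | (⨆ i, l i) ≤ p x} A A' :=
  stmt1_general d p hp hsupp l hmono A A' hA hsame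
end

section
/- Let p : ℝ^d → ℝ satisfy the Hölder condition |p(x) − p(y)| ≤ L‖x − y‖^α for all x, y, with 0 < α ≤ 1 and L > 0. Suppose A and A' are δ-separated: setting λ = inf_{z ∈ A ∪ A'} p(z), they lie in distinct connected components of {p > λ − δ}. Then with separator set S = {x : p(x) ≤ λ − δ}, ε = δ/(3λ), and σ = (δ/(3L))^{1/α}, the pair (A, A') is (ε, σ)-separated: every path from A to A' intersects S, and sup_{x ∈ S_σ} p(x) < (1 − ε) · inf_{x ∈ A_σ ∪ A'_σ} p(x), where B_σ denotes the σ-neighborhood ∪_{x∈B} B(x,σ) of a set B. -/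
open Metric Set

/-- `A` and `A'` lie in distinct connected components of `F`. -/
def distinctComps {X : Type*} [TopologicalSpace X] (F A A' : Set X) : Prop :=
  A ⊆ F ∧ A' ⊆ F ∧ ∀ x ∈ A, ∀ y ∈ A', connectedComponentIn F x ≠ connectedComponentIn F y

/-- The closed `σ`-enlargement of a set. -/
def enl {X : Type*} [PseudoMetricSpace X] (B : Set X) (σ : ℝ) : Set X :=
  ⋃ x ∈ B, Metric.closedBall x σ

theorem stmt3 (d : ℕ) (p : EuclideanSpace ℝ (Fin d) → ℝ)
    (α L : ℝ) (hα : 0 < α) (hα1 : α ≤ 1) (hL : 0 < L)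
    (hHolder : ∀ x y, |p x - p y| ≤ L * dist x y ^ α)
    (A A' : Set (EuclideanSpace ℝ (Fin d))) (hA : A.Nonempty) (hA' : A'.Nonempty)
    (δ : ℝ) (hδ : 0 < δ)
    (hlam_pos : 0 < sInf (p '' (A ∪ A'))) (hdlt_lam : δ < sInf (p '' (A ∪ A')))
    (hsep : distinctComps {x | sInf (p '' (A ∪ A')) - δ < p x} A A') :
    -- with λ = inf p over A ∪ A', S = {p ≤ λ - δ}, ε = δ/(3λ), σ = (δ/(3L))^(1/α):
    (∀ a ∈ A, ∀ b ∈ A', ∀ γ : Path a b, ∃ t, γ t ∈ {x | p x ≤ sInf (p '' (A ∪ A')) - δ}) ∧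
      sSup (p '' enl {x | p x ≤ sInf (p '' (A ∪ A')) - δ} ((δ / (3 * L)) ^ (α⁻¹ : ℝ))) <
        (1 - δ / (3 * sInf (p '' (A ∪ A')))) *
          sInf (p '' (enl A ((δ / (3 * L)) ^ (α⁻¹ : ℝ)) ∪ enl A' ((δ / (3 * L)) ^ (α⁻¹ : ℝ)))) := by
  set lam := sInf (p '' (A ∪ A')) with hlam
  set σ := (δ / (3 * L)) ^ (α⁻¹ : ℝ) with hσ
  have hL3 : (0:ℝ) < 3 * L := by linarith
  have hbase : (0:ℝ) < δ / (3 * L) := div_pos hδ hL3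
  have hσpos : 0 < σ := Real.rpow_pos_of_pos hbase _
  have hσα : L * σ ^ α = δ / 3 := by
    rw [hσ, ← Real.rpow_mul hbase.le, inv_mul_cancel₀ hα.ne', Real.rpow_one]
    field_simp
  constructor
  · -- path part
    intro a ha b hb γ
    by_contra h
    push_neg at h
    have hrange : range γ ⊆ {x | lam - δ < p x} := by
      rintro _ ⟨t, rfl⟩
      have := h t
      simp only [mem_setOf_eq] at this ⊢
      linarith [lt_of_not_ge this]
    have hconn : IsPreconnected (range γ) :=
      (isConnected_range γ.continuous).isPreconnected
    have hsub : range γ ⊆ connectedComponentIn {x | lam - δ < p x} a := by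
      apply hconn.subset_connectedComponentIn _ hrange
      exact ⟨0, γ.source⟩
    have hb' : b ∈ connectedComponentIn {x | lam - δ < p x} a :=
      hsub ⟨1, γ.target⟩
    exact hsep.2.2 a ha b hb (connectedComponentIn_eq hb')
  · -- sup/inf part
    have hbdd : BddBelow (p '' (A ∪ A')) := by
      by_contra h
      have : lam = 0 := by rw [hlam, Real.sInf_of_not_bddBelow h]
      linarith
    have hlam_le : ∀ z ∈ A ∪ A', lam ≤ p z := fun z hz =>
      csInf_le hbdd ⟨z, hz, rfl⟩
    -- Hölder step
    have hstep : ∀ x s : EuclideanSpace ℝ (Fin d), dist x s ≤ σ →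
        |p x - p s| ≤ δ / 3 := by
      intro x s hxs
      refine le_trans (hHolder x s) ?_
      rw [← hσα]
      exact mul_le_mul_of_nonneg_left
        (Real.rpow_le_rpow dist_nonneg hxs hα.le) hL.le
    -- sup bound
    have hsup : sSup (p '' enl {x | p x ≤ lam - δ} σ) ≤ lam - 2 * δ / 3 := by
      apply Real.sSup_le
      · rintro y ⟨x, hx, rfl⟩
        simp only [enl, mem_iUnion, exists_prop] at hx
        obtain ⟨s, hs, hxs⟩ := hx
        have h1 := hstep x s (mem_closedBall.mp hxs)
        have h2 : p s ≤ lam - δ := hs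
        have := abs_le.mp h1
        linarith [this.1, this.2]
      · linarith
    -- inf bound
    have hne : (p '' (enl A σ ∪ enl A' σ)).Nonempty := by
      obtain ⟨a, ha⟩ := hA
      exact ⟨p a, a, Or.inl (mem_iUnion₂.mpr ⟨a, ha, mem_closedBall_self hσpos.le⟩), rfl⟩
    have hinf : lam - δ / 3 ≤ sInf (p '' (enl A σ ∪ enl A' σ)) := by
      apply le_csInf hne
      rintro y ⟨x, hx, rfl⟩
      rcases hx with hx | hx <;>
      · simp only [enl, mem_iUnion, exists_prop] at hx
        obtain ⟨s, hs, hxs⟩ := hx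
        have h1 := hstep x s (mem_closedBall.mp hxs)
        have := abs_le.mp h1
        have h2 : lam ≤ p s := hlam_le s (by first | exact Or.inl hs | exact Or.inr hs)
        linarith [this.1, this.2]
    have hε : 0 < 1 - δ / (3 * lam) := by
      have : δ / (3 * lam) < 1 := by
        rw [div_lt_one (by linarith)]
        linarith
      linarith
    have hkey : lam - 2 * δ / 3 < (1 - δ / (3 * lam)) * (lam - δ / 3) := by
      have h1 : (1 - δ / (3 * lam)) * (lam - δ / 3)
          = lam - 2 * δ / 3 + δ ^ 2 / (9 * lam) := by
        field_simp
        ring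
      have h2 : 0 < δ ^ 2 / (9 * lam) := by positivity
      linarith
    calc sSup (p '' enl {x | p x ≤ lam - δ} σ) ≤ lam - 2 * δ / 3 := hsup
      _ < (1 - δ / (3 * lam)) * (lam - δ / 3) := hkey
      _ ≤ (1 - δ / (3 * lam)) * sInf (p '' (enl A σ ∪ enl A' σ)) :=
          mul_le_mul_of_nonneg_left hinf hε.le
end

section
/- Under the assumptions of the gap setting (density p with gap of size ε at λ_*, sup_x |p̂_h(x) − p_h(x)| ≤ aₙ, ε > 2aₙ, λ* = λ_* + ε > aₙ, and λ ∈ (λ_* + aₙ, λ* − aₙ)), let C be any connected component of S = {p ≥ λ*} and L̂(λ) = ∪_{X_i ∈ D̂_h(λ)} B(X_i, h). Then C_{−2h} ⊆ L̂(λ). -/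
/-!
If `B(x, 2h) ⊆ S = {p ≥ λ*}`, then `p_h ≥ λ*` at `x`, so `p̂_h(x) ≥ λ* - aₙ > 0` and some sample
point `X_j` lies in `B(x, h)`. Then `B(X_j, h) ⊆ B(x, 2h) ⊆ S`, so likewise
`p̂_h(X_j) ≥ λ* - aₙ > λ`, i.e. `X_j ∈ D̂_h(λ)`, and `x ∈ B(X_j, h) ⊆ L̂(λ)`.
-/

open Metric Set MeasureTheory

/-- Volume of the unit ball in `ℝ^d`. -/
noncomputable def Vd (d : ℕ) : ℝ :=
  (volume (closedBall (0 : EuclideanSpace ℝ (Fin d)) 1)).toReal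

open Classical in
/-- The spherical-kernel (DBSCAN) density estimator based on the sample `X`. -/
noncomputable def sphKDE (d n : ℕ) (X : Fin n → EuclideanSpace ℝ (Fin d)) (h : ℝ)
    (x : EuclideanSpace ℝ (Fin d)) : ℝ :=
  ((Finset.univ.filter fun i => X i ∈ closedBall x h).card : ℝ) / (n * h ^ d * Vd d)

/-- The expectation `p_h(x) = P(B(x,h))/(h^d V_d)` of the spherical KDE. -/
noncomputable def smoothed (d : ℕ) (p : EuclideanSpace ℝ (Fin d) → ℝ) (h : ℝ)
    (x : EuclideanSpace ℝ (Fin d)) : ℝ :=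
  (∫ z in closedBall x h, p z) / (h ^ d * Vd d)

/-- The `h`-erosion of a set. -/
def ero {X : Type*} [PseudoMetricSpace X] (B : Set X) (h : ℝ) : Set X :=
  {x ∈ B | Metric.closedBall x h ⊆ B}

lemma Vd_pos (d : ℕ) : 0 < Vd d :=
  ENNReal.toReal_pos (measure_closedBall_pos volume _ one_pos).ne' measure_closedBall_lt_top.ne

lemma volume_closedBall_toReal {d : ℕ} (x : EuclideanSpace ℝ (Fin d)) {h : ℝ} (hh : 0 ≤ h) :
    (volume (closedBall x h)).toReal = h ^ d * Vd d := by
  rw [Measure.addHaar_closedBall' volume x hh, ENNReal.toReal_mul,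
    ENNReal.toReal_ofReal (pow_nonneg hh _)]
  simp [Vd]

lemma le_smoothed_of_closedBall_subset {d : ℕ} {p : EuclideanSpace ℝ (Fin d) → ℝ}
    (hp : Integrable p) {h c : ℝ} (hh : 0 < h) {y : EuclideanSpace ℝ (Fin d)}
    (hy : closedBall y h ⊆ {z | c ≤ p z}) :
    c ≤ smoothed d p h y := by
  have hvol : 0 < h ^ d * Vd d := mul_pos (pow_pos hh d) (Vd_pos d)
  rw [smoothed, le_div_iff₀ hvol]
  calc c * (h ^ d * Vd d) = ∫ _ in closedBall y h, c := by
        rw [setIntegral_const, smul_eq_mul, measureReal_def,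
          volume_closedBall_toReal y hh.le, mul_comm]
    _ ≤ ∫ z in closedBall y h, p z :=
        setIntegral_mono_on (integrableOn_const measure_closedBall_lt_top.ne) hp.integrableOn
          measurableSet_closedBall hy

lemma exists_mem_closedBall_of_sphKDE_pos {d n : ℕ} {X : Fin n → EuclideanSpace ℝ (Fin d)}
    {h : ℝ} {x : EuclideanSpace ℝ (Fin d)} (hpos : 0 < sphKDE d n X h x) :
    ∃ i, X i ∈ closedBall x h := by
  classical
  by_contra! hnone
  simp [sphKDE, hnone] at hpos

lemma sub_le_sphKDE_of_closedBall_subset {d n : ℕ} {p : EuclideanSpace ℝ (Fin d) → ℝ}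
    (hp : Integrable p) {X : Fin n → EuclideanSpace ℝ (Fin d)} {h an c : ℝ} (hh : 0 < h)
    (hclose : ∀ x, |sphKDE d n X h x - smoothed d p h x| ≤ an) {y : EuclideanSpace ℝ (Fin d)}
    (hy : closedBall y h ⊆ {z | c ≤ p z}) :
    c - an ≤ sphKDE d n X h y := by
  linarith [le_smoothed_of_closedBall_subset hp hh hy, (abs_le.mp (hclose y)).1]

theorem stmt12_general (d n : ℕ) (p : EuclideanSpace ℝ (Fin d) → ℝ)
    (hone : ∫ x, p x = 1)
    (lstar ε : ℝ)
    (X : Fin n → EuclideanSpace ℝ (Fin d)) (h : ℝ) (hh : 0 < h)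
    (an : ℝ) (hstar : an < lstar + ε)
    (hclose : ∀ x, |sphKDE d n X h x - smoothed d p h x| ≤ an)
    (l : ℝ) (hl : l ∈ Set.Ioo (lstar + an) (lstar + ε - an))
    (x₀ : EuclideanSpace ℝ (Fin d)) :
    -- C is the connected component of S = {p ≥ lstar + ε} containing x₀
    ero (connectedComponentIn {x | lstar + ε ≤ p x} x₀) (2 * h) ⊆
      ⋃ i ∈ {i : Fin n | l ≤ sphKDE d n X h (X i)}, closedBall (X i) h := by
  rintro x ⟨-, hball⟩
  have hp : Integrable p := .of_integral_ne_zero (by simp [hone])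
  have hS : closedBall x (2 * h) ⊆ {x | lstar + ε ≤ p x} :=
    hball.trans (connectedComponentIn_subset _ _)
  have hx := sub_le_sphKDE_of_closedBall_subset hp hh hclose
    ((closedBall_subset_closedBall (by linarith)).trans hS)
  obtain ⟨j, hj⟩ := exists_mem_closedBall_of_sphKDE_pos (by linarith : 0 < sphKDE d n X h x)
  have hXj := sub_le_sphKDE_of_closedBall_subset hp hh hclose
    ((closedBall_subset_closedBall' (by linarith [mem_closedBall.mp hj])).trans hS)
  exact mem_iUnion₂.mpr ⟨j, show l ≤ _ by linarith [hl.2], mem_closedBall_comm.mp hj⟩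

theorem stmt12 (d n : ℕ) (p : EuclideanSpace ℝ (Fin d) → ℝ)
    (hmeas : Measurable p) (hp0 : ∀ x, 0 ≤ p x) (hone : ∫ x, p x = 1)
    (lstar ε : ℝ) (hε : 0 < ε)
    (hgap : ∀ x, p x < lstar + ε → p x ≤ lstar)
    (X : Fin n → EuclideanSpace ℝ (Fin d)) (h : ℝ) (hh : 0 < h)
    (an : ℝ) (han : 0 ≤ an) (hεan : 2 * an < ε) (hstar : an < lstar + ε)
    (hclose : ∀ x, |sphKDE d n X h x - smoothed d p h x| ≤ an)
    (l : ℝ) (hl : l ∈ Set.Ioo (lstar + an) (lstar + ε - an))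
    (x₀ : EuclideanSpace ℝ (Fin d)) (hx₀ : lstar + ε ≤ p x₀) :
    -- C is the connected component of S = {p ≥ lstar + ε} containing x₀
    ero (connectedComponentIn {x | lstar + ε ≤ p x} x₀) (2 * h) ⊆
      ⋃ i ∈ {i : Fin n | l ≤ sphKDE d n X h (X i)}, closedBall (X i) h :=
  stmt12_general d n p hone lstar ε X h hh an hstar hclose l hl x₀
end

section
/- Let p : ℝ² → ℝ (or ℝ^d → ℝ) be a C² Morse function whose gradient is L-Lipschitz, on a compact domain. Let λ be a split level with critical point y₀ on {p = λ} (so ∇p(y₀) = 0 and ∇²p(y₀) is non-degenerate), and let C₁, C₂ be two connected components of {p > λ} that merge at λ near y₀. Then there exist constants c_S > 0 and δ_S > 0 such that for all δ ∈ (0, δ_S], dist(C₁ ∩ {p ≥ λ + δ}, C₂ ∩ {p ≥ λ + δ}) ≥ c_S √δ. -/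
/-!
Since `a` and `b` lie in different components of `{p > l}`, the segment `[a, b]` leaves this set
at some `z` with `p z ≤ l`. Expanding `p` around `z` with the Lipschitz bound on its derivative,
`p a - p z ≤ t ⟪∇p z, a - b⟫ + L t² ‖a - b‖²` and `p b - p z ≤ -s ⟪∇p z, a - b⟫ + L s² ‖a - b‖²`
for `z = s a + t b`; the convex combination of the two gives `δ ≤ L/4 ‖a - b‖²`.
-/

open Metric Set

theorem lipschitzWith_fderiv_of_gradient {F : Type*} [NormedAddCommGroup F] [InnerProductSpace ℝ F]
    [CompleteSpace F] {f : F → ℝ} {K : NNReal} (h : LipschitzWith K (gradient f)) :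
    LipschitzWith K (fderiv ℝ f) := by
  have : fderiv ℝ f = InnerProductSpace.toDual ℝ F ∘ gradient f := by
    funext x; simp only [Function.comp_apply, gradient, LinearIsometryEquiv.apply_symm_apply]
  rw [this, ← one_mul K]
  exact (InnerProductSpace.toDual ℝ F).isometry.lipschitz.comp h

theorem norm_image_sub_sub_fderiv_le_of_lipschitzWith {E : Type*} [NormedAddCommGroup E]
    [NormedSpace ℝ E] {f : E → ℝ} {K : NNReal} (hf : Differentiable ℝ f)
    (hK : LipschitzWith K (fderiv ℝ f)) (x y : E) :
    ‖f y - f x - fderiv ℝ f x (y - x)‖ ≤ K * ‖y - x‖ ^ 2 := by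
  have bound : ∀ w ∈ closedBall x ‖y - x‖, ‖fderiv ℝ f w - fderiv ℝ f x‖ ≤ K * ‖y - x‖ := by
    intro w hw
    rw [← dist_eq_norm]
    exact (hK.dist_le_mul w x).trans (by gcongr; exact hw)
  calc ‖f y - f x - fderiv ℝ f x (y - x)‖ ≤ K * ‖y - x‖ * ‖y - x‖ :=
        (convex_closedBall x _).norm_image_sub_le_of_norm_fderiv_le' (fun w _ => hf w) bound
          (mem_closedBall_self (norm_nonneg _)) (by simp [dist_eq_norm])
    _ = K * ‖y - x‖ ^ 2 := by ring

theorem exists_mem_segment_notMem_of_connectedComponentIn_ne {E : Type*} [AddCommGroup E]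
    [Module ℝ E] [TopologicalSpace E] [IsTopologicalAddGroup E] [ContinuousSMul ℝ E]
    {S : Set E} {a b : E} (h : connectedComponentIn S a ≠ connectedComponentIn S b) :
    ∃ z ∈ segment ℝ a b, z ∉ S := by
  by_contra! hseg
  exact h (connectedComponentIn_eq ((convex_segment a b).isPreconnected.subset_connectedComponentIn
    (left_mem_segment ℝ a b) hseg (right_mem_segment ℝ a b)))

theorem sub_le_of_mem_segment_of_lipschitzWith_fderiv {E : Type*} [NormedAddCommGroup E]
    [NormedSpace ℝ E] {f : E → ℝ} {K : NNReal} (hf : Differentiable ℝ f)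
    (hK : LipschitzWith K (fderiv ℝ f)) {a b z : E} (hz : z ∈ segment ℝ a b) {c : ℝ}
    (ha : c ≤ f a) (hb : c ≤ f b) :
    c - f z ≤ K / 4 * dist a b ^ 2 := by
  obtain ⟨s, t, hs, ht, hst, rfl⟩ := hz
  have haz : a - (s • a + t • b) = t • (a - b) := by
    calc _ = (s + t) • a - (s • a + t • b) := by rw [hst, one_smul]
      _ = _ := by module
  have hbz : b - (s • a + t • b) = (-s) • (a - b) := by
    calc _ = (s + t) • b - (s • a + t • b) := by rw [hst, one_smul]
      _ = _ := by module
  have hqa := norm_image_sub_sub_fderiv_le_of_lipschitzWith hf hK (s • a + t • b) a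
  have hqb := norm_image_sub_sub_fderiv_le_of_lipschitzWith hf hK (s • a + t • b) b
  rw [haz, norm_smul, map_smul, Real.norm_of_nonneg ht] at hqa
  rw [hbz, norm_smul, map_smul, norm_neg, Real.norm_of_nonneg hs] at hqb
  rw [dist_eq_norm]
  have hqa' := (abs_le.mp (Real.norm_eq_abs _ ▸ hqa)).2
  have hqb' := (abs_le.mp (Real.norm_eq_abs _ ▸ hqb)).2
  simp only [smul_eq_mul] at hqa' hqb'
  have hst' : s * t ≤ 1 / 4 := by nlinarith [sq_nonneg (s - t)]
  -- weighting the two expansions by `s` and `t` cancels their linear terms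
  nlinarith [mul_le_mul_of_nonneg_left hqa' hs, mul_le_mul_of_nonneg_left hqb' ht,
    mul_le_mul_of_nonneg_left hst' (by positivity : (0:ℝ) ≤ K * ‖a - b‖ ^ 2)]

theorem stmt13_general (d : ℕ) (p : EuclideanSpace ℝ (Fin d) → ℝ)
    (hp : ContDiff ℝ 2 p)
    (L : ℝ) (hL : 0 < L) (hgrad : LipschitzWith (Real.toNNReal L) (fun x => gradient p x))
    (l : ℝ)
    (C₁ C₂ : Set (EuclideanSpace ℝ (Fin d)))
    (hC₁ : ∃ x ∈ {x | l < p x}, C₁ = connectedComponentIn {x | l < p x} x)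
    (hC₂ : ∃ x ∈ {x | l < p x}, C₂ = connectedComponentIn {x | l < p x} x)
    (hne : C₁ ≠ C₂) :
    ∃ cS > 0, ∃ δS > 0, ∀ δ ∈ Set.Ioc (0 : ℝ) δS,
      ∀ a ∈ C₁ ∩ {x | l + δ ≤ p x}, ∀ b ∈ C₂ ∩ {x | l + δ ≤ p x},
        cS * Real.sqrt δ ≤ dist a b := by
  refine ⟨2 / Real.sqrt L, by positivity, 1, one_pos, ?_⟩
  rintro δ ⟨hδ, -⟩ a ⟨haC, ha⟩ b ⟨hbC, hb⟩
  obtain ⟨x₁, -, rfl⟩ := hC₁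
  obtain ⟨x₂, -, rfl⟩ := hC₂
  rw [connectedComponentIn_eq haC, connectedComponentIn_eq hbC] at hne
  obtain ⟨z, hz, hzl⟩ := exists_mem_segment_notMem_of_connectedComponentIn_ne hne
  have hzl : p z ≤ l := not_lt.mp hzl
  have hsq : δ ≤ L / 4 * dist a b ^ 2 := by
    have := sub_le_of_mem_segment_of_lipschitzWith_fderiv (hp.differentiable (by norm_num))
      (lipschitzWith_fderiv_of_gradient hgrad) hz ha hb
    rw [Real.coe_toNNReal L hL.le] at this
    linarith
  rw [div_mul_eq_mul_div, div_le_iff₀ (Real.sqrt_pos.mpr hL)]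
  calc 2 * Real.sqrt δ = Real.sqrt (4 * δ) := by
        rw [Real.sqrt_mul' _ hδ.le, show (4 : ℝ) = 2 ^ 2 by norm_num, Real.sqrt_sq two_pos.le]
    _ ≤ Real.sqrt (L * dist a b ^ 2) := Real.sqrt_le_sqrt (by linarith)
    _ = dist a b * Real.sqrt L := by rw [Real.sqrt_mul hL.le, Real.sqrt_sq dist_nonneg, mul_comm]

theorem stmt13 (d : ℕ) (p : EuclideanSpace ℝ (Fin d) → ℝ)
    (hp : ContDiff ℝ 2 p)
    (L : ℝ) (hL : 0 < L) (hgrad : LipschitzWith (Real.toNNReal L) (fun x => gradient p x))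
    (K : Set (EuclideanSpace ℝ (Fin d))) (hK : IsCompact K)
    (l : ℝ) (hsub : {x | l < p x} ⊆ K)
    -- Morse: every critical point has non-degenerate Hessian
    (hmorse : ∀ x, gradient p x = 0 →
      Function.Injective (fderiv ℝ (fun y => gradient p y) x))
    (y₀ : EuclideanSpace ℝ (Fin d)) (hy₀ : p y₀ = l) (hcrit : gradient p y₀ = 0)
    (C₁ C₂ : Set (EuclideanSpace ℝ (Fin d)))
    (hC₁ : ∃ x ∈ {x | l < p x}, C₁ = connectedComponentIn {x | l < p x} x)
    (hC₂ : ∃ x ∈ {x | l < p x}, C₂ = connectedComponentIn {x | l < p x} x)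
    (hne : C₁ ≠ C₂)
    -- C₁ and C₂ merge at level l near y₀
    (hmerge : y₀ ∈ closure C₁ ∩ closure C₂) :
    ∃ cS > 0, ∃ δS > 0, ∀ δ ∈ Set.Ioc (0 : ℝ) δS,
      ∀ a ∈ C₁ ∩ {x | l + δ ≤ p x}, ∀ b ∈ C₂ ∩ {x | l + δ ≤ p x},
        cS * Real.sqrt δ ≤ dist a b :=
  stmt13_general d p hp L hL hgrad l C₁ C₂ hC₁ hC₂ hne
end
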